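/- For real numbers t, r, s, w ≥ 0 with max{t, r, s, w} = 1 and all x, y ∈ ℝ, the limit as p → ∞ of (t +_p r +_p s +_p w)^{-1} · (t·x +_p r·x +_p s·y +_p w·y) equals (t·x) ⊞ (r·x) ⊞ (s·y) ⊞ (w·y), the 4-ary boxplus of the tuple (tx, rx, sy, wy), where +_p denotes the power-mean sum a +_p b = (a^{2p+1} + b^{2p+1})^{1/(2p+1)} extended to four terms. -/

import Mathlib

open Finset Filter

/-- The binary idempotent symmetric operation `⊞`. -/
noncomputable def boxplus (a b : ℝ) : ℝ :=
  if |b| < |a| then a else if |a| = |b| then (a + b) / 2 else b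

/-- The lower operation `⌣⁻`. -/
noncomputable def smileMinus (a b : ℝ) : ℝ :=
  if |b| < |a| then a else if |a| = |b| then min a b else b

/-- Real odd `(2p+1)`-th root. -/
noncomputable def oddRoot (p : ℕ) (x : ℝ) : ℝ :=
  if 0 ≤ x then x ^ ((1 : ℝ) / (2 * p + 1)) else -((-x) ^ ((1 : ℝ) / (2 * p + 1)))

/-- The `n`-ary boxplus over a finite index set. -/
noncomputable def naryBox {ι : Type*} (s : Finset ι) (f : ι → ℝ) : ℝ :=
  let R := s.filter fun i =>
    (s.filter fun j => f j = f i).card ≠ (s.filter fun j => f j = -f i).card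
  if hR : R.Nonempty then
    let M := R.sup' hR fun i => |f i|
    if (R.filter fun i => f i = M).card > (R.filter fun i => f i = -M).card then
      R.sup' hR f
    else
      R.inf' hR f
  else 0

/-- Componentwise `n`-ary boxplus for vectors. -/
noncomputable def vecBox {ι : Type*} {n : ℕ} (s : Finset ι) (f : ι → Fin n → ℝ) :
    Fin n → ℝ :=
  fun k => naryBox s (fun i => f i k)


lemma sum_cancel {ι : Type*} (s : Finset ι) (v : ι → ℝ) (n : ℕ) (hn : Odd n) :
    ∑ i ∈ s.filter (fun i => (s.filter fun j => v j = v i).card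
      = (s.filter fun j => v j = -v i).card), v i ^ n = 0 := by
  classical
  set D := s.filter (fun i => (s.filter fun j => v j = v i).card
      = (s.filter fun j => v j = -v i).card) with hD
  -- key: fiber counts in D equal fiber counts in s, for values attained in D
  have hfib : ∀ b, (∃ i ∈ D, v i = b ∨ v i = -b) →
      ((D.filter fun j => v j = b) = (s.filter fun j => v j = b) ∧
       (D.filter fun j => v j = -b) = (s.filter fun j => v j = -b) ∧
       (s.filter fun j => v j = b).card = (s.filter fun j => v j = -b).card) := by
    intro b ⟨i, hiD, hib⟩
    have hi' := hiD
    rw [hD, mem_filter] at hi'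
    have hcards : (s.filter fun j => v j = b).card = (s.filter fun j => v j = -b).card := by
      rcases hib with h | h
      · rw [← h]; exact hi'.2
      · rw [← neg_neg b, ← h]
        have := hi'.2.symm
        simpa [h] using this
    refine ⟨?_, ?_, hcards⟩
    · ext j
      simp only [hD, mem_filter, and_assoc]
      constructor
      · rintro ⟨hjs, -, hj⟩; exact ⟨hjs, hj⟩
      · rintro ⟨hjs, hj⟩
        refine ⟨hjs, ?_, hj⟩
        simp only [hj]; exact hcards
    · ext j
      simp only [hD, mem_filter, and_assoc]
      constructor
      · rintro ⟨hjs, -, hj⟩; exact ⟨hjs, hj⟩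
      · rintro ⟨hjs, hj⟩
        refine ⟨hjs, ?_, hj⟩
        simp only [hj, neg_neg]; exact hcards.symm
  have hDcard : ∀ b, (∃ i ∈ D, v i = b ∨ v i = -b) →
      (D.filter fun j => v j = b).card = (D.filter fun j => v j = -b).card := by
    intro b hb
    obtain ⟨h1, h2, h3⟩ := hfib b hb
    rw [h1, h2, h3]
  rw [Finset.sum_comp (fun x : ℝ => x ^ n) v]
  refine Finset.sum_involution (fun b _ => -b) ?_ ?_ ?_ ?_
  · intro b hb
    obtain ⟨i, hiD, hib⟩ := Finset.mem_image.1 hb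
    have hc := hDcard b ⟨i, hiD, Or.inl hib⟩
    have : (-b) ^ n = -(b ^ n) := hn.neg_pow b
    rw [this]
    show #{a ∈ D | v a = b} • b ^ n + #{a ∈ D | v a = -b} • -b ^ n = 0
    rw [← hc]
    simp [smul_neg]
  · intro b hb hne
    intro h
    apply hne
    have hb0 : b = 0 := by have : -b = b := h; linarith
    simp [hb0, zero_pow hn.pos.ne']
  · intro b hb
    obtain ⟨i, hiD, hib⟩ := Finset.mem_image.1 hb
    have hc := hDcard b ⟨i, hiD, Or.inl hib⟩
    have hpos : 0 < (D.filter fun j => v j = -b).card := by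
      rw [← hc]
      exact Finset.card_pos.2 ⟨i, Finset.mem_filter.2 ⟨hiD, hib⟩⟩
    obtain ⟨j, hj⟩ := Finset.card_pos.1 hpos
    rw [Finset.mem_filter] at hj
    exact Finset.mem_image.2 ⟨j, hj.1, hj.2⟩
  · intro b hb; exact neg_neg b

noncomputable def Rset (v : Fin 4 → ℝ) : Finset (Fin 4) :=
  Finset.univ.filter fun i =>
    (Finset.univ.filter fun j => v j = v i).card ≠ (Finset.univ.filter fun j => v j = -v i).card

lemma h2p1 : Tendsto (fun p : ℕ => 2 * p + 1) atTop atTop :=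
  tendsto_atTop_mono (fun p => by simp; omega) tendsto_id

lemma tendsto_exp0 : Tendsto (fun p : ℕ => (1:ℝ) / (2 * p + 1)) atTop (nhds 0) := by
  have h : Tendsto (fun p : ℕ => 2 * (p:ℝ) + 1) atTop atTop := by
    apply Filter.tendsto_atTop_add_const_right
    exact Tendsto.const_mul_atTop two_pos tendsto_natCast_atTop_atTop
  simp only [one_div]
  exact h.inv_tendsto_atTop

lemma rpow_tendsto_one {a : ℝ} (ha : 0 < a) :
    Tendsto (fun p : ℕ => a ^ ((1:ℝ)/(2 * p + 1))) atTop (nhds 1) := by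
  have := Filter.Tendsto.rpow (tendsto_const_nhds (x := a) (f := atTop)) tendsto_exp0
    (Or.inl ha.ne')
  simpa using this

lemma rpow_squeeze {g : ℕ → ℝ} {a b : ℝ} (ha : 0 < a)
    (h : ∀ᶠ p in atTop, g p ∈ Set.Icc a b) :
    Tendsto (fun p : ℕ => g p ^ ((1:ℝ)/(2 * p + 1))) atTop (nhds 1) := by
  obtain ⟨p₀, hp₀⟩ := h.exists
  have hb : 0 < b := lt_of_lt_of_le ha (le_trans hp₀.1 hp₀.2)
  refine tendsto_of_tendsto_of_tendsto_of_le_of_le' (rpow_tendsto_one ha) (rpow_tendsto_one hb)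
    ?_ ?_
  · exact h.mono fun p hp => Real.rpow_le_rpow ha.le hp.1 (by positivity)
  · exact h.mono fun p hp => Real.rpow_le_rpow (le_trans ha.le hp.1) hp.2 (by positivity)

lemma oddRoot_aux (p : ℕ) (x : ℝ) (hx : 0 ≤ x) :
    (if 0 ≤ x then x ^ ((1 : ℝ) / (2 * p + 1)) else -((-x) ^ ((1 : ℝ) / (2 * p + 1))))
    = x ^ ((1:ℝ)/(2*p+1)) := if_pos hx




lemma sum_eq_sum_Rset (v : Fin 4 → ℝ) (n : ℕ) (hn : Odd n) :
    ∑ i, v i ^ n = ∑ i ∈ Rset v, v i ^ n := by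
  classical
  have h := Finset.sum_filter_add_sum_filter_not Finset.univ
    (fun i => (Finset.univ.filter fun j => v j = v i).card
      ≠ (Finset.univ.filter fun j => v j = -v i).card)
    (fun i => v i ^ n)
  have h0 : ∑ i ∈ Finset.univ.filter (fun i =>
      ¬ ((Finset.univ.filter fun j => v j = v i).card
      ≠ (Finset.univ.filter fun j => v j = -v i).card)), v i ^ n = 0 := by
    simp only [not_not]
    exact sum_cancel Finset.univ v n hn
  rw [Rset]
  linarith [h, h0]

lemma Bpos (v : Fin 4 → ℝ) {M : ℝ} (hR : (Rset v).Nonempty)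
    (hM : ((Rset v).sup' hR fun i => |v i|) = M)
    (hPQ : ((Rset v).filter fun i => v i = -M).card < ((Rset v).filter fun i => v i = M).card) :
    Tendsto (fun p : ℕ => oddRoot p (∑ i, v i ^ (2 * p + 1))) atTop (nhds M) := by
  classical
  have habs : ∀ i ∈ Rset v, |v i| ≤ M := fun i hi => le_trans (Finset.le_sup' (fun i => |v i|) hi) (le_of_eq hM)
  have hvne : ∀ i ∈ Rset v, v i ≠ 0 := by
    intro i hi h0
    rw [Rset, Finset.mem_filter] at hi
    exact hi.2 (by simp [h0])
  have hMpos : 0 < M := by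
    obtain ⟨i, hi⟩ := hR
    exact lt_of_lt_of_le (abs_pos.2 (hvne i hi)) (habs i hi)
  set P := ((Rset v).filter fun i => v i = M).card with hP
  set Q := ((Rset v).filter fun i => v i = -M).card with hQ
  set g : ℕ → ℝ := fun p => ∑ i ∈ Rset v, (v i / M) ^ (2 * p + 1) with hg
  have hSg : ∀ p : ℕ, ∑ i, v i ^ (2 * p + 1) = M ^ (2 * p + 1) * g p := by
    intro p
    rw [sum_eq_sum_Rset v _ ⟨p, by ring⟩, hg, Finset.mul_sum]
    refine Finset.sum_congr rfl fun i hi => ?_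
    rw [div_pow, mul_div_cancel₀]
    exact pow_ne_zero _ hMpos.ne'
  have hglim : Tendsto g atTop (nhds ((P : ℝ) - Q)) := by
    have hlim : ∀ i ∈ Rset v, Tendsto (fun p : ℕ => (v i / M) ^ (2 * p + 1)) atTop
        (nhds (if v i = M then (1:ℝ) else if v i = -M then -1 else 0)) := by
      intro i hi
      split_ifs with h1 h2
      · simp only [h1, div_self hMpos.ne', one_pow]
        exact tendsto_const_nhds
      · simp only [h2, neg_div, div_self hMpos.ne']
        have : ∀ p : ℕ, (-1 : ℝ) ^ (2 * p + 1) = -1 := fun p => Odd.neg_one_pow ⟨p, by ring⟩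
        simp only [this]
        exact tendsto_const_nhds
      · have habs' : |v i / M| < 1 := by
          rw [abs_div, abs_of_pos hMpos, div_lt_one hMpos]
          rcases lt_or_eq_of_le (habs i hi) with h | h
          · exact h
          · exfalso
            rcases (abs_eq hMpos.le).1 h with h' | h'
            exacts [h1 h', h2 h']
        exact (tendsto_pow_atTop_nhds_zero_of_abs_lt_one habs').comp h2p1
    have := tendsto_finset_sum (Rset v) hlim
    convert this using 2
    -- ∑ ite = P - Q
    rw [← Finset.sum_filter_add_sum_filter_not (Rset v) (fun i => v i = M)]
    have e1 : ∑ i ∈ (Rset v).filter (fun i => v i = M),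
        (if v i = M then (1:ℝ) else if v i = -M then -1 else 0) = P := by
      rw [Finset.sum_congr rfl (fun i hi => if_pos (Finset.mem_filter.1 hi).2)]
      simp [hP]
    have e2 : ∑ i ∈ (Rset v).filter (fun i => ¬ v i = M),
        (if v i = M then (1:ℝ) else if v i = -M then -1 else 0) = -Q := by
      rw [Finset.sum_congr rfl (fun i hi => if_neg (Finset.mem_filter.1 hi).2)]
      rw [Finset.sum_ite, Finset.sum_const, Finset.sum_const, Finset.filter_filter]
      have : (Rset v).filter (fun i => ¬ v i = M ∧ v i = -M) = (Rset v).filter (fun i => v i = -M) := by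
        apply Finset.filter_congr
        intro i _
        constructor
        · exact fun h => h.2
        · intro h
          refine ⟨fun hM' => ?_, h⟩
          rw [hM'] at h
          linarith
      rw [this, hQ]
      simp
    rw [e1, e2]
    ring
  have hc1 : (1:ℝ) ≤ (P : ℝ) - Q := by
    have : Q + 1 ≤ P := hPQ
    have := Nat.cast_le (α := ℝ) |>.2 this
    push_cast at this
    linarith
  have hev : ∀ᶠ p in atTop, g p ∈ Set.Icc (1/2 : ℝ) ((P:ℝ) - Q + 1) :=
    hglim (Icc_mem_nhds (by linarith) (by linarith))
  have hrt := rpow_squeeze (by norm_num : (0:ℝ) < 1/2) hev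
  have hEq : ∀ᶠ p in atTop, M * (g p) ^ ((1:ℝ)/(2 * p + 1))
      = oddRoot p (∑ i, v i ^ (2 * p + 1)) := by
    refine hev.mono fun p hp => ?_
    have hgpos : 0 < g p := lt_of_lt_of_le (by norm_num) hp.1
    have hS : 0 < M ^ (2 * p + 1) * g p := by positivity
    rw [hSg p, oddRoot, if_pos hS.le,
      Real.mul_rpow (by positivity) hgpos.le]
    congr 1
    rw [← Real.rpow_natCast M (2 * p + 1), ← Real.rpow_mul hMpos.le]
    rw [show ((2 * p + 1 : ℕ) : ℝ) * ((1:ℝ)/(2 * p + 1)) = 1 by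
      push_cast
      field_simp]
    exact (Real.rpow_one M).symm
  have : Tendsto (fun p : ℕ => M * (g p) ^ ((1:ℝ)/(2 * p + 1))) atTop (nhds (M * 1)) :=
    tendsto_const_nhds.mul hrt
  rw [mul_one] at this
  exact this.congr' hEq

lemma PQ_ne (v : Fin 4 → ℝ) (hR : (Rset v).Nonempty) {M : ℝ}
    (hM : ((Rset v).sup' hR fun i => |v i|) = M) :
    ((Rset v).filter fun i => v i = M).card ≠ ((Rset v).filter fun i => v i = -M).card := by
  classical
  obtain ⟨i, hi, hvi⟩ := Finset.exists_mem_eq_sup' hR (fun i => |v i|)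
  rw [hM] at hvi
  have hM0 : 0 ≤ M := hvi ▸ abs_nonneg _
  have hcase : v i = M ∨ v i = -M := (abs_eq hM0).1 hvi.symm
  have hi' := hi
  rw [Rset, Finset.mem_filter] at hi'
  have huniv : (Finset.univ.filter fun j => v j = M).card
      ≠ (Finset.univ.filter fun j => v j = -M).card := by
    rcases hcase with h | h
    · simpa [h] using hi'.2
    · intro hcontra
      apply hi'.2
      simp only [h, neg_neg]
      exact hcontra.symm
  have h1 : (Rset v).filter (fun j => v j = M) = Finset.univ.filter (fun j => v j = M) := by
    ext j
    simp only [Rset, Finset.mem_filter, Finset.mem_univ, true_and]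
    constructor
    · exact fun h => h.2
    · intro hj
      refine ⟨?_, hj⟩
      simpa [hj] using huniv
  have h2 : (Rset v).filter (fun j => v j = -M) = Finset.univ.filter (fun j => v j = -M) := by
    ext j
    simp only [Rset, Finset.mem_filter, Finset.mem_univ, true_and]
    constructor
    · exact fun h => h.2
    · intro hj
      refine ⟨?_, hj⟩
      simp only [hj, neg_neg]
      exact huniv.symm
  rw [h1, h2]
  exact huniv

lemma Rset_neg (v : Fin 4 → ℝ) : Rset (fun i => -v i) = Rset v := by
  classical
  unfold Rset
  apply Finset.filter_congr
  intro i _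
  have e1 : (Finset.univ.filter fun j => -v j = -v i) = Finset.univ.filter fun j => v j = v i := by
    ext j; simp
  have e2 : (Finset.univ.filter fun j => -v j = -(-v i)) = Finset.univ.filter fun j => v j = -v i := by
    ext j; simp [neg_eq_iff_eq_neg]
  simp only [e1, e2]


lemma oddRoot_neg (p : ℕ) (x : ℝ) : oddRoot p (-x) = - oddRoot p x := by
  rcases lt_trichotomy x 0 with h | h | h
  · rw [oddRoot, oddRoot, if_pos (by linarith : (0:ℝ) ≤ -x), if_neg (not_le.2 h), neg_neg]
  · subst h
    have h0 : oddRoot p 0 = 0 := by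
      rw [oddRoot, if_pos le_rfl, Real.zero_rpow (by positivity : (1:ℝ)/(2 * p + 1) ≠ 0)]
    rw [neg_zero, h0, neg_zero]
  · rw [oddRoot, oddRoot, if_neg (not_le.2 (by linarith : -x < 0)), if_pos h.le, neg_neg]

lemma naryBox_empty (v : Fin 4 → ℝ) (h : ¬ (Rset v).Nonempty) :
    naryBox Finset.univ v = 0 := by
  rw [naryBox]
  exact dif_neg h

lemma naryBox_sup (v : Fin 4 → ℝ) (hR : (Rset v).Nonempty) {M : ℝ}
    (hM : ((Rset v).sup' hR fun i => |v i|) = M)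
    (h : ((Rset v).filter fun i => v i = -M).card < ((Rset v).filter fun i => v i = M).card) :
    naryBox Finset.univ v = M := by
  have hd : (Finset.univ.filter fun i : Fin 4 =>
      (Finset.univ.filter fun j => v j = v i).card ≠ (Finset.univ.filter fun j => v j = -v i).card)
      = Rset v := rfl
  rw [naryBox]
  simp only [hd]
  rw [dif_pos hR]
  rw [if_pos (by rw [hM]; exact h)]
  have habs : ∀ i ∈ Rset v, |v i| ≤ M := fun i hi =>
    le_trans (Finset.le_sup' (fun i => |v i|) hi) (le_of_eq hM)
  apply le_antisymm
  · exact Finset.sup'_le _ _ fun i hi => le_trans (le_abs_self _) (habs i hi)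
  · obtain ⟨i, hi⟩ := Finset.card_pos.1 (lt_of_le_of_lt (Nat.zero_le _) h)
    rw [Finset.mem_filter] at hi
    exact hi.2 ▸ Finset.le_sup' v hi.1

lemma naryBox_inf (v : Fin 4 → ℝ) (hR : (Rset v).Nonempty) {M : ℝ}
    (hM : ((Rset v).sup' hR fun i => |v i|) = M)
    (h : ((Rset v).filter fun i => v i = M).card < ((Rset v).filter fun i => v i = -M).card) :
    naryBox Finset.univ v = -M := by
  have hd : (Finset.univ.filter fun i : Fin 4 =>
      (Finset.univ.filter fun j => v j = v i).card ≠ (Finset.univ.filter fun j => v j = -v i).card)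
      = Rset v := rfl
  rw [naryBox]
  simp only [hd]
  rw [dif_pos hR]
  rw [if_neg (by rw [hM]; omega)]
  have habs : ∀ i ∈ Rset v, |v i| ≤ M := fun i hi =>
    le_trans (Finset.le_sup' (fun i => |v i|) hi) (le_of_eq hM)
  apply le_antisymm
  · obtain ⟨i, hi⟩ := Finset.card_pos.1 (lt_of_le_of_lt (Nat.zero_le _) h)
    rw [Finset.mem_filter] at hi
    exact hi.2 ▸ Finset.inf'_le v hi.1
  · exact Finset.le_inf' _ _ fun i hi => neg_le_of_abs_le (habs i hi)

lemma tendsto_oddRoot_sum (v : Fin 4 → ℝ) :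
    Tendsto (fun p : ℕ => oddRoot p (∑ i, v i ^ (2 * p + 1))) atTop
      (nhds (naryBox Finset.univ v)) := by
  classical
  by_cases hR : (Rset v).Nonempty
  · set M := (Rset v).sup' hR fun i => |v i| with hMdef
    have hne := PQ_ne v hR (rfl : ((Rset v).sup' hR fun i => |v i|) = M)
    rcases lt_or_gt_of_ne hne with h | h
    · -- Q > P : negative case
      rw [naryBox_inf v hR rfl h]
      -- apply Bpos to -v
      have hR' : (Rset (fun i => -v i)).Nonempty := by rw [Rset_neg]; exact hR
      have hM' : ((Rset (fun i => -v i)).sup' hR' fun i => |(-v i)|) = M := by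
        have : ∀ i ∈ Rset (fun i => -v i), |(-v i)| = |v i| := fun i _ => abs_neg _
        rw [Finset.sup'_congr hR' (Rset_neg v) this]
      have hPQ' : ((Rset (fun i => -v i)).filter fun i => -v i = -M).card
          < ((Rset (fun i => -v i)).filter fun i => -v i = M).card := by
        rw [Rset_neg]
        have e1 : ((Rset v).filter fun i => -v i = -M) = (Rset v).filter fun i => v i = M := by
          apply Finset.filter_congr; intro i _; simp
        have e2 : ((Rset v).filter fun i => -v i = M) = (Rset v).filter fun i => v i = -M := by
          apply Finset.filter_congr; intro i _; simp [neg_eq_iff_eq_neg]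
        rw [e1, e2]
        exact h
      have hB := Bpos (fun i => -v i) hR' hM' hPQ'
      have hB' := hB.neg
      rw [show -M = -M from rfl] at hB'
      refine hB'.congr fun p => ?_
      have : ∑ i, (-v i) ^ (2 * p + 1) = -∑ i, v i ^ (2 * p + 1) := by
        rw [← Finset.sum_neg_distrib]
        exact Finset.sum_congr rfl fun i _ => Odd.neg_pow ⟨p, by ring⟩ _
      rw [this, oddRoot_neg, neg_neg]
    · -- P > Q : positive case
      rw [naryBox_sup v hR rfl h]
      exact Bpos v hR rfl h
  · rw [naryBox_empty v hR]
    have hRe : Rset v = ∅ := Finset.not_nonempty_iff_eq_empty.1 hR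
    have : ∀ p : ℕ, oddRoot p (∑ i, v i ^ (2 * p + 1)) = 0 := by
      intro p
      rw [sum_eq_sum_Rset v _ ⟨p, by ring⟩, hRe, Finset.sum_empty, oddRoot, if_pos le_rfl,
        Real.zero_rpow (by positivity : (1:ℝ)/(2 * p + 1) ≠ 0)]
    simp only [this]; exact tendsto_const_nhds

theorem limit_of_four_term_combination (t r s w : ℝ)
    (ht : 0 ≤ t) (hr : 0 ≤ r) (hs : 0 ≤ s) (hw : 0 ≤ w)
    (hmax : max (max (max t r) s) w = 1) (x y : ℝ) :
    Filter.Tendsto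
      (fun p : ℕ =>
        (oddRoot p (t ^ (2 * p + 1) + r ^ (2 * p + 1) + s ^ (2 * p + 1) + w ^ (2 * p + 1)))⁻¹ *
          oddRoot p ((t * x) ^ (2 * p + 1) + (r * x) ^ (2 * p + 1) +
            (s * y) ^ (2 * p + 1) + (w * y) ^ (2 * p + 1)))
      Filter.atTop
      (nhds (naryBox (Finset.univ : Finset (Fin 4))
        ![t * x, r * x, s * y, w * y])) := by
  have hle : t ≤ 1 ∧ r ≤ 1 ∧ s ≤ 1 ∧ w ≤ 1 := by
    refine ⟨?_, ?_, ?_, ?_⟩ <;> rw [← hmax]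
    · exact le_trans (le_max_left t r) (le_trans (le_max_left _ s) (le_max_left _ w))
    · exact le_trans (le_max_right t r) (le_trans (le_max_left _ s) (le_max_left _ w))
    · exact le_trans (le_max_right _ s) (le_max_left _ w)
    · exact le_max_right _ w
  have hone : (1:ℝ) ≤ t ∨ 1 ≤ r ∨ 1 ≤ s ∨ 1 ≤ w := by
    have h : (1:ℝ) ≤ max (max (max t r) s) w := hmax.ge
    simp only [le_max_iff] at h; tauto
  have hden : Tendsto (fun p : ℕ =>
      oddRoot p (t ^ (2 * p + 1) + r ^ (2 * p + 1) + s ^ (2 * p + 1) + w ^ (2 * p + 1)))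
      atTop (nhds 1) := by
    have hmem : ∀ p : ℕ, (t ^ (2*p+1) + r ^ (2*p+1) + s ^ (2*p+1) + w ^ (2*p+1))
        ∈ Set.Icc (1:ℝ) 4 := by
      intro p
      constructor
      · have h1 : ∀ a : ℝ, (1:ℝ) ≤ a → (1:ℝ) ≤ a ^ (2*p+1) := fun a ha => one_le_pow₀ ha
        have ht' := pow_nonneg ht (2*p+1)
        have hr' := pow_nonneg hr (2*p+1)
        have hs' := pow_nonneg hs (2*p+1)
        have hw' := pow_nonneg hw (2*p+1)
        rcases hone with h | h | h | h
        · linarith [h1 t h]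
        · linarith [h1 r h]
        · linarith [h1 s h]
        · linarith [h1 w h]
      · have h1 : t ^ (2*p+1) ≤ 1 := pow_le_one₀ ht hle.1
        have h2 : r ^ (2*p+1) ≤ 1 := pow_le_one₀ hr hle.2.1
        have h3 : s ^ (2*p+1) ≤ 1 := pow_le_one₀ hs hle.2.2.1
        have h4 : w ^ (2*p+1) ≤ 1 := pow_le_one₀ hw hle.2.2.2
        linarith
    have := rpow_squeeze one_pos (Filter.Eventually.of_forall hmem)
    refine this.congr fun p => ?_
    rw [oddRoot, if_pos (le_trans zero_le_one (hmem p).1)]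
  have hnum := tendsto_oddRoot_sum ![t * x, r * x, s * y, w * y]
  have hnum' : Tendsto (fun p : ℕ =>
      oddRoot p ((t * x) ^ (2 * p + 1) + (r * x) ^ (2 * p + 1) +
        (s * y) ^ (2 * p + 1) + (w * y) ^ (2 * p + 1))) atTop
      (nhds (naryBox (Finset.univ : Finset (Fin 4)) ![t * x, r * x, s * y, w * y])) := by
    refine hnum.congr fun p => ?_
    congr 1
    rw [Fin.sum_univ_four]
    simp [Matrix.cons_val_zero, Matrix.cons_val_one]
  have := (hden.inv₀ one_ne_zero).mul hnum'
  simpa using this
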